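/- Let f : M → ℝⁿ be an isometric immersion as above with second fundamental form A, and structure functions a, b, c. Then the Gauss-type condition ⟨A(T,Z),A(Z,T)⟩ − ⟨A(Z,Z),A(T,T)⟩ = 0 is equivalent to the equation T(c̄) − i c̄ + 2b c̄ = 0. -/
import Mathlib


open scoped BigOperators

/-- The ℂ-bilinear extension of the Euclidean inner product of ℝⁿ. -/
noncomputable def eip {R : Type*} [CommRing R] {n : ℕ} (u v : Fin n → R) : R :=
  ∑ j, u j * v j

/-- The (complexified) second fundamental form of the immersion with components
`f`: `A(U,V) = UVf − ⟨UVf,Z̄f⟩Zf − ⟨UVf,Zf⟩Z̄f − ⟨UVf,Tf⟩Tf`. -/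
noncomputable def sff {R : Type*} [CommRing R] [Algebra ℂ R] {n : ℕ}
    (Z Zb T U V : Derivation ℂ R R) (f : Fin n → R) : Fin n → R :=
  fun j =>
    U (V (f j))
      - eip (fun k => U (V (f k))) (fun k => Zb (f k)) * Z (f j)
      - eip (fun k => U (V (f k))) (fun k => Z (f k)) * Zb (f j)
      - eip (fun k => U (V (f k))) (fun k => T (f k)) * T (f j)

section helpers

variable {R : Type*} [CommRing R] {n : ℕ}

lemma eip_comm (u v : Fin n → R) : eip u v = eip v u := by
  unfold eip
  exact Finset.sum_congr rfl fun j _ => mul_comm _ _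

lemma eip_sub_left (u v w : Fin n → R) :
    eip (fun j => u j - v j) w = eip u w - eip v w := by
  unfold eip
  rw [← Finset.sum_sub_distrib]
  exact Finset.sum_congr rfl fun j _ => sub_mul _ _ _

lemma eip_sub_right (u v w : Fin n → R) :
    eip u (fun j => v j - w j) = eip u v - eip u w := by
  unfold eip
  rw [← Finset.sum_sub_distrib]
  exact Finset.sum_congr rfl fun j _ => mul_sub _ _ _

lemma eip_mul_left (x : R) (u w : Fin n → R) :
    eip (fun j => x * u j) w = x * eip u w := by
  unfold eip
  rw [Finset.mul_sum]
  exact Finset.sum_congr rfl fun j _ => mul_assoc _ _ _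

lemma eip_mul_right (x : R) (u w : Fin n → R) :
    eip u (fun j => x * w j) = x * eip u w := by
  unfold eip
  rw [Finset.mul_sum]
  exact Finset.sum_congr rfl fun j _ => by ring

lemma deriv_eip [Algebra ℂ R] (D : Derivation ℂ R R) (u v : Fin n → R) :
    D (eip u v) = eip (fun j => D (u j)) v + eip u (fun j => D (v j)) := by
  unfold eip
  rw [map_sum, ← Finset.sum_add_distrib]
  refine Finset.sum_congr rfl fun j _ => ?_
  rw [Derivation.leibniz, smul_eq_mul, smul_eq_mul]
  ring

lemma halve [Algebra ℂ R] (x : R) (h : x + x = 0) : x = 0 := by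
  have h2 : (2 : ℂ) • x = 0 := by rw [two_smul]; exact h
  calc x = ((2 : ℂ)⁻¹ * 2) • x := by norm_num
  _ = (2 : ℂ)⁻¹ • ((2 : ℂ) • x) := by rw [mul_smul]
  _ = 0 := by rw [h2, smul_zero]

end helpers

/-- The Gauss-type condition
⟨A(T,Z),A(Z,T)⟩ − ⟨A(Z,Z),A(T,T)⟩ = 0 is equivalent to T(c̄) − i c̄ + 2b c̄ = 0. -/
theorem gauss_equation_equivalence
    (R : Type*) [CommRing R] [StarRing R] [Algebra ℂ R] {n : ℕ}
    (Z Zb T : Derivation ℂ R R)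
    (hconjZ : ∀ x : R, Zb (star x) = star (Z x))
    (hconjT : ∀ x : R, T (star x) = star (T x))
    (a b c : R)
    (hframe : ∀ x y z : R, x • Z + y • Zb + z • T = 0 → x = 0 ∧ y = 0 ∧ z = 0)
    (h1 : (algebraMap ℂ R Complex.I) • ⁅Z, Zb⁆ = T + a • Z + (star a) • Zb)
    (h2 : ⁅Z, T⁆ = b • Z + (star c) • Zb)
    (h3 : ⁅Zb, T⁆ = c • Z + (star b) • Zb)
    (hb : b + star b = 0)
    (f : Fin n → R)
    (hf_real : ∀ j, star (f j) = f j)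
    (hiso1 : eip (fun j => Z (f j)) (fun j => Z (f j)) = 0)
    (hiso2 : eip (fun j => T (f j)) (fun j => Z (f j)) = 0)
    (hiso3 : eip (fun j => T (f j)) (fun j => T (f j)) = 1)
    (hiso4 : eip (fun j => Z (f j)) (fun j => Zb (f j)) = 1) :
    (eip (sff Z Zb T T Z f) (sff Z Zb T Z T f)
        - eip (sff Z Zb T Z Z f) (sff Z Zb T T T f) = 0)
      ↔ T (star c) - algebraMap ℂ R Complex.I * star c + 2 * b * star c = 0 := by
  set Ir : R := algebraMap ℂ R Complex.I with hIrdef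
  -- pointwise conjugation facts
  have hZbf : ∀ j, Zb (f j) = star (Z (f j)) := fun j => by
    rw [← hconjZ, hf_real]
  have hTfr : ∀ j, star (T (f j)) = T (f j) := fun j => by
    rw [← hconjT, hf_real]
  -- pointwise bracket identities
  have hZTx : ∀ x : R, Z (T x) - T (Z x) = b * Z x + star c * Zb x := by
    intro x
    have h := congrArg (fun D : Derivation ℂ R R => D x) h2
    simpa [Derivation.commutator_apply, Derivation.add_apply, Derivation.smul_apply,
      smul_eq_mul] using h
  have hZZbx : ∀ x : R, Ir * (Z (Zb x) - Zb (Z x)) = T x + a * Z x + star a * Zb x := by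
    intro x
    have h := congrArg (fun D : Derivation ℂ R R => D x) h1
    simpa [Derivation.commutator_apply, Derivation.add_apply, Derivation.smul_apply,
      smul_eq_mul, mul_sub] using h
  -- bracket identities at the level of eip
  have brktg : ∀ (g w : Fin n → R),
      eip (fun j => Z (T (g j))) w - eip (fun j => T (Z (g j))) w
        = b * eip (fun j => Z (g j)) w + star c * eip (fun j => Zb (g j)) w := by
    intro g w
    simp only [eip, Finset.mul_sum, ← Finset.sum_sub_distrib, ← Finset.sum_add_distrib]
    refine Finset.sum_congr rfl fun j _ => ?_
    linear_combination w j * hZTx (g j)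
  have brkt1 : ∀ (w : Fin n → R),
      Ir * (eip (fun j => Z (Zb (f j))) w - eip (fun j => Zb (Z (f j))) w)
        = eip (fun j => T (f j)) w + a * eip (fun j => Z (f j)) w
          + star a * eip (fun j => Zb (f j)) w := by
    intro w
    simp only [eip, Finset.mul_sum, ← Finset.sum_sub_distrib, ← Finset.sum_add_distrib]
    refine Finset.sum_congr rfl fun j _ => ?_
    linear_combination w j * hZZbx (f j)
  -- metric facts
  have gZbZ : eip (fun j => Zb (f j)) (fun j => Z (f j)) = 1 := by
    rw [eip_comm]; exact hiso4
  have gZbZb : eip (fun j => Zb (f j)) (fun j => Zb (f j)) = 0 := by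
    have h : eip (fun j => Zb (f j)) (fun j => Zb (f j))
        = star (eip (fun j => Z (f j)) (fun j => Z (f j))) := by
      simp only [eip, star_sum, star_mul', hZbf]
    rw [h, hiso1, star_zero]
  have gTZb : eip (fun j => T (f j)) (fun j => Zb (f j)) = 0 := by
    have h : eip (fun j => T (f j)) (fun j => Zb (f j))
        = star (eip (fun j => T (f j)) (fun j => Z (f j))) := by
      simp only [eip, star_sum, star_mul', hZbf, hTfr]
    rw [h, hiso2, star_zero]
  have gZbT : eip (fun j => Zb (f j)) (fun j => T (f j)) = 0 := by
    rw [eip_comm]; exact gTZb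
  have hZf_T : eip (fun j => Z (f j)) (fun j => T (f j)) = 0 := by
    rw [eip_comm]; exact hiso2
  -- second order facts
  have hZZ_Z : eip (fun j => Z (Z (f j))) (fun j => Z (f j)) = 0 := by
    have d := deriv_eip Z (fun j => Z (f j)) (fun j => Z (f j))
    rw [hiso1, map_zero] at d
    refine halve _ ?_
    linear_combination -d - eip_comm (fun j => Z (f j)) (fun j => Z (Z (f j)))
  have hTZ_Z : eip (fun j => T (Z (f j))) (fun j => Z (f j)) = 0 := by
    have d := deriv_eip T (fun j => Z (f j)) (fun j => Z (f j))
    rw [hiso1, map_zero] at d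
    refine halve _ ?_
    linear_combination -d - eip_comm (fun j => Z (f j)) (fun j => T (Z (f j)))
  have hZT_T : eip (fun j => Z (T (f j))) (fun j => T (f j)) = 0 := by
    have d := deriv_eip Z (fun j => T (f j)) (fun j => T (f j))
    rw [hiso3, Derivation.map_one_eq_zero] at d
    refine halve _ ?_
    linear_combination -d - eip_comm (fun j => T (f j)) (fun j => Z (T (f j)))
  have hTT_T : eip (fun j => T (T (f j))) (fun j => T (f j)) = 0 := by
    have d := deriv_eip T (fun j => T (f j)) (fun j => T (f j))
    rw [hiso3, Derivation.map_one_eq_zero] at d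
    refine halve _ ?_
    linear_combination -d - eip_comm (fun j => T (f j)) (fun j => T (T (f j)))
  have hZT_Z : eip (fun j => Z (T (f j))) (fun j => Z (f j)) = star c := by
    linear_combination brktg f (fun j => Z (f j)) + hTZ_Z + b * hiso1 + star c * gZbZ
  have hTZ_T : eip (fun j => T (Z (f j))) (fun j => T (f j)) = 0 := by
    linear_combination -brktg f (fun j => T (f j)) + hZT_T - b * hZf_T - star c * gZbT
  have hTT_Z : eip (fun j => T (T (f j))) (fun j => Z (f j)) = 0 := by
    have d := deriv_eip T (fun j => T (f j)) (fun j => Z (f j))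
    rw [hiso2, map_zero] at d
    linear_combination -d - eip_comm (fun j => T (f j)) (fun j => T (Z (f j))) - hTZ_T
  have hZf_ZT : eip (fun j => Z (f j)) (fun j => Z (T (f j))) = star c := by
    rw [eip_comm]; exact hZT_Z
  have hZf_TT : eip (fun j => Z (f j)) (fun j => T (T (f j))) = 0 := by
    rw [eip_comm]; exact hTT_Z
  have hTf_TT : eip (fun j => T (f j)) (fun j => T (T (f j))) = 0 := by
    rw [eip_comm]; exact hTT_T
  -- the mixed second-order quantity
  have hF10 : eip (fun j => Z (T (f j))) (fun j => Zb (f j))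
      = eip (fun j => T (Z (f j))) (fun j => Zb (f j)) + b := by
    linear_combination brktg f (fun j => Zb (f j)) + b * hiso4 + star c * gZbZb
  have hF11 := deriv_eip Z (fun j => Zb (f j)) (fun j => T (f j))
  rw [gZbT, map_zero] at hF11
  have hAzzb : eip (fun j => Z (Zb (f j))) (fun j => T (f j))
      = -(eip (fun j => T (Z (f j))) (fun j => Zb (f j)) + b) := by
    linear_combination -hF11 - eip_comm (fun j => Zb (f j)) (fun j => Z (T (f j))) - hF10
  have hF13 := deriv_eip Zb (fun j => T (f j)) (fun j => Z (f j))
  rw [hiso2, map_zero] at hF13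
  have hBzbz : eip (fun j => Zb (Z (f j))) (fun j => T (f j))
      = -(eip (fun j => Zb (T (f j))) (fun j => Z (f j))) := by
    linear_combination -hF13 - eip_comm (fun j => T (f j)) (fun j => Zb (Z (f j)))
  have hF12 := brkt1 (fun j => T (f j))
  rw [hAzzb, hBzbz, hiso3, hZf_T, gZbT] at hF12
  have hI2 : Ir * Ir = -1 := by
    rw [hIrdef, ← map_mul, Complex.I_mul_I, map_neg, map_one]
  have hIm : Ir * (eip (fun j => Zb (T (f j))) (fun j => Z (f j))
      - eip (fun j => T (Z (f j))) (fun j => Zb (f j)) - b) = 1 := by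
    linear_combination hF12
  have hm : eip (fun j => Zb (T (f j))) (fun j => Z (f j))
      = eip (fun j => T (Z (f j))) (fun j => Zb (f j)) + b - Ir := by
    linear_combination (-Ir) * hIm
      + (eip (fun j => Zb (T (f j))) (fun j => Z (f j))
          - eip (fun j => T (Z (f j))) (fun j => Zb (f j)) - b) * hI2
  -- the Gauss curvature computation
  have hF14 := deriv_eip T (fun j => Z (T (f j))) (fun j => Z (f j))
  rw [hZT_Z] at hF14
  have hF15 := deriv_eip Z (fun j => T (T (f j))) (fun j => Z (f j))
  rw [hTT_Z, map_zero] at hF15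
  have hF16 : eip (fun j => Z (T (T (f j)))) (fun j => Z (f j))
      - eip (fun j => T (Z (T (f j)))) (fun j => Z (f j))
      = b * eip (fun j => Z (T (f j))) (fun j => Z (f j))
        + star c * eip (fun j => Zb (T (f j))) (fun j => Z (f j)) :=
    brktg (fun j => T (f j)) (fun j => Z (f j))
  rw [hZT_Z] at hF16
  have hcomm1 : eip (fun j => T (Z (f j))) (fun j => Z (T (f j)))
      = eip (fun j => Z (T (f j))) (fun j => T (Z (f j))) := eip_comm _ _
  have hcomm2 : eip (fun j => Z (Z (f j))) (fun j => T (T (f j)))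
      = eip (fun j => T (T (f j))) (fun j => Z (Z (f j))) := eip_comm _ _
  have key : eip (sff Z Zb T T Z f) (sff Z Zb T Z T f)
      - eip (sff Z Zb T Z Z f) (sff Z Zb T T T f)
      = T (star c) - Ir * star c + 2 * b * star c := by
    unfold sff
    simp only [eip_sub_left, eip_sub_right, eip_mul_left, eip_mul_right]
    simp only [hTZ_Z, hTZ_T, hZT_Z, hZT_T, hZf_ZT, hZf_T, hiso4, hZZ_Z, hTT_Z, hTT_T,
      hZf_TT, hTf_TT, gTZb, hiso1, hiso2, hiso3]
    linear_combination hcomm1 - hcomm2 - hF14 + hF15 + hF16 + star c * hm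
  rw [key]
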